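/- arXiv:2301.08933 — 3 statements merged into one kernel-verified Lean document; each statement's English description precedes it below -/
import Mathlib

section
/- The number of parking functions on m-1 cars equals the number of labeled trees (Cayley trees) on m vertices, namely m^{m-2}. -/
/-- `f : Fin n → Fin n` is a parking function on `n` cars:
`|f⁻¹([i])| ≥ i` for `i = 1, ..., n` (0-indexed form). -/
def IsParkingFunction {n : ℕ} (f : Fin n → Fin n) : Prop :=
  ∀ i : Fin n, (i : ℕ) < (Finset.univ.filter fun x => f x ≤ i).card

section AuxCycle


/-- Abstract cycle lemma: if `A` drops by 1 each period `m`, there is a unique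
starting point `s < m` from which `A s` is minimal over the following window. -/
theorem cycle_lemma (m : ℕ) (hm : 0 < m) (A : ℕ → ℤ) (hA : ∀ t, A (t + m) = A t - 1) :
    ∃! s : ℕ, s < m ∧ ∀ t, s < t → t < s + m → A s ≤ A t := by
  classical
  have hne : (Finset.range m).Nonempty := ⟨0, Finset.mem_range.mpr hm⟩
  set M : ℤ := (Finset.range m).inf' hne A with hM
  have hexn : ∃ s, s < m ∧ A s = M := by
    obtain ⟨s, hs, hsv⟩ := Finset.exists_mem_eq_inf' hne A
    exact ⟨s, Finset.mem_range.mp hs, hsv.symm⟩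
  let s := Nat.find hexn
  have hs : s < m ∧ A s = M := Nat.find_spec hexn
  have hmin : ∀ u, u < m → M ≤ A u := fun u hu =>
    Finset.inf'_le A (Finset.mem_range.mpr hu)
  have hlt : ∀ u, u < s → M < A u := by
    intro u hu
    have hum : u < m := lt_trans hu hs.1
    rcases lt_or_eq_of_le (hmin u hum) with h | h
    · exact h
    · exact absurd ⟨hum, h.symm⟩ (Nat.find_min hexn hu)
  refine ⟨s, ⟨hs.1, ?_⟩, ?_⟩
  · intro t hst htm
    by_cases htm' : t < m
    · exact hs.2 ▸ hmin t htm'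
    · have h1 : t - m + m = t := Nat.sub_add_cancel (le_of_not_gt htm')
      have hu : t - m < s := by omega
      have h2 := hA (t - m)
      rw [h1] at h2
      have := hlt (t - m) hu
      omega
  · -- uniqueness
    intro s' ⟨hs'm, hs'⟩
    by_contra hne'
    -- wlog-style: handle both orders
    rcases Nat.lt_or_ge s' s with h | h
    · -- s' < s : from s' property with t = s : A s' ≤ A s = M, but A s' > M
      have := hs' s (by omega) (by omega)
      have := hlt s' h
      omega
    · have hss' : s < s' := lt_of_le_of_ne h (Ne.symm hne')
      -- from s property, t = s' : A s ≤ A s'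
      have h1 := hs.2 ▸ hmin s' hs'm
      -- from s' property, t = s + m : A s' ≤ A (s+m) = A s - 1
      have h2 := hs' (s + m) (by omega) (by omega)
      rw [hA s] at h2
      have h3 : A s = M := hs.2
      omega

end AuxCycle

section AuxPollak

open Finset

namespace Pollak

variable {n : ℕ}

def cnt (g : Fin n → ZMod (n + 1)) (j : ℕ) : ℕ :=
  (univ.filter fun x => g x = (j : ZMod (n + 1))).card

def A (g : Fin n → ZMod (n + 1)) (t : ℕ) : ℤ :=
  (∑ j ∈ range t, (cnt g j : ℤ)) - t

lemma cnt_period (g : Fin n → ZMod (n + 1)) (j : ℕ) : cnt g (j + (n + 1)) = cnt g j := by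
  simp [cnt, Nat.cast_add, ZMod.natCast_self]

lemma sum_range_cnt (g : Fin n → ZMod (n + 1)) : ∑ j ∈ range (n + 1), cnt g j = n := by
  have h := Finset.card_eq_sum_card_fiberwise (f := fun x : Fin n => (g x).val)
      (s := univ) (t := range (n + 1)) (fun x _ => mem_range.mpr (ZMod.val_lt _))
  rw [Finset.card_univ, Fintype.card_fin] at h
  have h2 : ∑ j ∈ range (n + 1), cnt g j
      = ∑ j ∈ range (n + 1), (univ.filter fun x : Fin n => (g x).val = j).card := by
    apply Finset.sum_congr rfl
    intro j hj
    unfold cnt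
    apply congrArg
    apply Finset.filter_congr
    intro x _
    constructor
    · intro hx
      rw [hx, ZMod.val_natCast_of_lt (mem_range.mp hj)]
    · intro hx
      rw [← hx]
      simp [ZMod.natCast_val, ZMod.cast_id]
  rw [h2]
  exact h.symm

lemma sum_Ico_cnt (g : Fin n → ZMod (n + 1)) (t : ℕ) :
    ∑ j ∈ Ico t (t + (n + 1)), cnt g j = n := by
  induction t with
  | zero => simpa using sum_range_cnt g
  | succ t ih =>
    have h1 : ∑ j ∈ Ico t (t + (n + 1)), cnt g j
        = cnt g t + ∑ j ∈ Ico (t + 1) (t + (n + 1)), cnt g j :=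
      Finset.sum_eq_sum_Ico_succ_bot (by omega) _
    have h2 := Finset.sum_Ico_succ_top (a := t + 1) (b := t + (n + 1)) (by omega) (cnt g)
    have h3 : t + 1 + (n + 1) = t + (n + 1) + 1 := by omega
    rw [h3, h2, cnt_period]
    omega

lemma A_period (g : Fin n → ZMod (n + 1)) (t : ℕ) : A g (t + (n + 1)) = A g t - 1 := by
  have h0 := Finset.sum_range_add_sum_Ico (fun j => (cnt g j : ℤ))
      (show t ≤ t + (n + 1) by omega)
  have h2 : ∑ j ∈ Ico t (t + (n + 1)), (cnt g j : ℤ) = (n : ℤ) := by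
    rw [← Nat.cast_sum, sum_Ico_cnt]
  unfold A
  push_cast
  linarith [h0, h2]

lemma window_card (g : Fin n → ZMod (n + 1)) (c : ZMod (n + 1)) (i : ℕ) (hi : i < n + 1) :
    (univ.filter fun x => (g x + c).val ≤ i).card
      = ∑ j ∈ Ico ((-c).val) ((-c).val + (i + 1)), cnt g j := by
  set s := (-c).val with hs
  have hsval : ((s : ℕ) : ZMod (n + 1)) = -c := by
    rw [hs]; simp [ZMod.natCast_val, ZMod.cast_id]
  have key : (univ.filter fun x => (g x + c).val ≤ i)
      = (Ico s (s + (i + 1))).biUnion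
          (fun j => univ.filter fun x => g x = (j : ZMod (n + 1))) := by
    ext x
    simp only [mem_filter, mem_univ, true_and, mem_biUnion, mem_Ico]
    constructor
    · intro hx
      refine ⟨s + (g x + c).val, ⟨by omega, by omega⟩, ?_⟩
      push_cast
      rw [hsval, ZMod.natCast_val, ZMod.cast_id]
      ring
    · rintro ⟨j, ⟨hj1, hj2⟩, hj3⟩
      have h1 : g x + c = ((j - s : ℕ) : ZMod (n + 1)) := by
        rw [Nat.cast_sub hj1, hj3, hsval]
        ring
      rw [h1, ZMod.val_natCast_of_lt (by omega)]
      omega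
  have hdisj : ∀ j ∈ Ico s (s + (i + 1)), ∀ j' ∈ Ico s (s + (i + 1)), j ≠ j' →
      Disjoint (univ.filter fun x : Fin n => g x = (j : ZMod (n + 1)))
        (univ.filter fun x : Fin n => g x = (j' : ZMod (n + 1))) := by
    intro j hj j' hj' hne
    simp only [mem_Ico] at hj hj'
    rw [Finset.disjoint_left]
    intro x hx hx'
    simp only [mem_filter, mem_univ, true_and] at hx hx'
    apply hne
    have hmod : (j : ZMod (n + 1)) = (j' : ZMod (n + 1)) := by rw [← hx, hx']
    have hmq := (ZMod.natCast_eq_natCast_iff _ _ _).mp hmod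
    rcases le_total j j' with hle | hle
    · have hd : (n + 1) ∣ j' - j := (Nat.modEq_iff_dvd' hle).mp hmq
      have := Nat.eq_zero_of_dvd_of_lt hd
      omega
    · have hd : (n + 1) ∣ j - j' := (Nat.modEq_iff_dvd' hle).mp hmq.symm
      have := Nat.eq_zero_of_dvd_of_lt hd
      omega
  rw [key, Finset.card_biUnion hdisj]
  simp [cnt]

/-- the "plain" parking property for `ZMod`-valued functions -/
def Qp (g : Fin n → ZMod (n + 1)) : Prop :=
  ∀ i, i < n → i < (univ.filter fun x => (g x).val ≤ i).card

lemma A_sub (g : Fin n → ZMod (n + 1)) (s l : ℕ) :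
    (∑ j ∈ Ico s (s + l), (cnt g j : ℤ)) = A g (s + l) - A g s + l := by
  have h0 := Finset.sum_range_add_sum_Ico (fun j => (cnt g j : ℤ))
      (show s ≤ s + l by omega)
  unfold A
  push_cast
  linarith

lemma Qp_shift_iff (g : Fin n → ZMod (n + 1)) (c : ZMod (n + 1)) :
    Qp (fun x => g x + c)
      ↔ ∀ t, (-c).val < t → t < (-c).val + (n + 1) → A g ((-c).val) ≤ A g t := by
  show (∀ i, i < n → i < (univ.filter fun x => (g x + c).val ≤ i).card) ↔ _
  set s := (-c).val with hs
  have bridge : ∀ i, i < n →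
      (((univ.filter fun x => (g x + c).val ≤ i).card : ℤ)
        = A g (s + (i + 1)) - A g s + (i + 1)) := by
    intro i hi
    rw [window_card g c i (by omega), Nat.cast_sum, A_sub g s (i + 1)]
    push_cast
    ring
  constructor
  · intro h t hst htm
    have hi1 : t - s - 1 < n := by omega
    have hc := h (t - s - 1) hi1
    have hb := bridge (t - s - 1) hi1
    have ht : t = s + (t - s - 1 + 1) := by omega
    rw [← ht] at hb
    omega
  · intro h i hi
    have hb := bridge i hi
    have hA := h (s + (i + 1)) (by omega) (by omega)
    omega

lemma existsUnique_shift (g : Fin n → ZMod (n + 1)) :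
    ∃! c : ZMod (n + 1), Qp (fun x => g x + c) := by
  obtain ⟨s, ⟨hsm, hgood⟩, huniq⟩ := cycle_lemma (n + 1) (by omega) (A g) (A_period g)
  refine ⟨-(s : ZMod (n + 1)), ?_, ?_⟩
  · show Qp fun x => g x + -((s : ℕ) : ZMod (n + 1))
    rw [Qp_shift_iff]
    have hv : (-(-((s : ℕ) : ZMod (n + 1)))).val = s := by
      rw [neg_neg, ZMod.val_natCast_of_lt hsm]
    rw [hv]
    exact hgood
  · intro c hc
    rw [Qp_shift_iff] at hc
    have h2 : (-c).val = s := huniq _ ⟨ZMod.val_lt _, hc⟩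
    have h3 : -c = ((s : ℕ) : ZMod (n + 1)) := by
      rw [← h2]
      simp [ZMod.natCast_val, ZMod.cast_id]
    exact neg_eq_iff_eq_neg.mp h3

/-- the canonical shift making `g` a parking function -/
noncomputable def csh (g : Fin n → ZMod (n + 1)) : ZMod (n + 1) :=
  (existsUnique_shift g).choose

lemma csh_spec (g : Fin n → ZMod (n + 1)) : Qp (fun x => g x + csh g) :=
  (existsUnique_shift g).choose_spec.1

lemma csh_unique (g : Fin n → ZMod (n + 1)) (c : ZMod (n + 1))
    (h : Qp (fun x => g x + c)) : c = csh g :=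
  (existsUnique_shift g).choose_spec.2 c h

noncomputable def shiftEquiv :
    (Fin n → ZMod (n + 1)) ≃ {g : Fin n → ZMod (n + 1) // Qp g} × ZMod (n + 1) where
  toFun g := (⟨fun x => g x + csh g, csh_spec g⟩, csh g)
  invFun p := fun x => p.1.1 x - p.2
  left_inv g := by
    funext x
    simp
  right_inv := by
    rintro ⟨⟨p, hp⟩, d⟩
    have hq : Qp fun x => (fun y => p y - d) x + d := by
      have he : (fun x => (fun y => p y - d) x + d) = p := by funext x; ring
      rw [he]
      exact hp
    have hd : d = csh (fun y => p y - d) := csh_unique _ d hq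
    refine Prod.ext ?_ ?_
    · apply Subtype.ext
      funext x
      show p x - d + csh (fun y => p y - d) = p x
      rw [← hd]
      ring
    · exact hd.symm

lemma card_Qp_mul : Nat.card {g : Fin n → ZMod (n + 1) // Qp g} * (n + 1) = (n + 1) ^ n := by
  have h1 := Nat.card_congr (shiftEquiv (n := n))
  rw [Nat.card_prod] at h1
  have h2 : Nat.card (Fin n → ZMod (n + 1)) = (n + 1) ^ n := by
    rw [Nat.card_eq_fintype_card, Fintype.card_fun, ZMod.card, Fintype.card_fin]
  have h3 : Nat.card (ZMod (n + 1)) = n + 1 := by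
    rw [Nat.card_eq_fintype_card, ZMod.card]
  rw [h2, h3] at h1
  exact h1.symm

lemma Qp.val_lt {g : Fin n → ZMod (n + 1)} (hg : Qp g) (x : Fin n) : (g x).val < n := by
  have hn : 0 < n := x.pos
  have h := hg (n - 1) (by omega)
  have hle : (univ.filter fun y => (g y).val ≤ n - 1).card ≤ Fintype.card (Fin n) :=
    le_trans (Finset.card_le_card (Finset.filter_subset _ _)) (le_of_eq (Finset.card_univ))
  rw [Fintype.card_fin] at hle
  have hcard : (univ.filter fun y => (g y).val ≤ n - 1).card = n := by omega
  have huniv : (univ.filter fun y => (g y).val ≤ n - 1) = univ := by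
    apply Finset.eq_univ_of_card
    rw [hcard, Fintype.card_fin]
  have hx : x ∈ univ.filter fun y => (g y).val ≤ n - 1 := by rw [huniv]; exact Finset.mem_univ x
  have := (Finset.mem_filter.mp hx).2
  omega

noncomputable def pfEquiv :
    {f : Fin n → Fin n // IsParkingFunction f} ≃ {g : Fin n → ZMod (n + 1) // Qp g} where
  toFun f := ⟨fun x => ((f.1 x : ℕ) : ZMod (n + 1)), by
    intro i hi
    have h := f.2 ⟨i, hi⟩
    have he : (univ.filter fun x => (((f.1 x : ℕ) : ZMod (n + 1))).val ≤ i)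
        = univ.filter fun x => f.1 x ≤ ⟨i, hi⟩ := by
      apply Finset.filter_congr
      intro x _
      rw [ZMod.val_natCast_of_lt (by omega : (f.1 x : ℕ) < n + 1)]
      simp [Fin.le_def]
    rw [he]
    exact h⟩
  invFun g := ⟨fun x => ⟨(g.1 x).val, g.2.val_lt x⟩, by
    intro i
    have h := g.2 i.1 i.2
    have he : (univ.filter fun x => (⟨(g.1 x).val, g.2.val_lt x⟩ : Fin n) ≤ i)
        = univ.filter fun x => (g.1 x).val ≤ (i : ℕ) := by
      apply Finset.filter_congr
      intro x _
      simp [Fin.le_def]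
    rw [he]
    exact h⟩
  left_inv f := by
    apply Subtype.ext
    funext x
    apply Fin.ext
    show (((f.1 x : ℕ) : ZMod (n + 1))).val = (f.1 x : ℕ)
    exact ZMod.val_natCast_of_lt (by omega : (f.1 x : ℕ) < n + 1)
  right_inv g := by
    apply Subtype.ext
    funext x
    show (((g.1 x).val : ℕ) : ZMod (n + 1)) = g.1 x
    simp [ZMod.natCast_val, ZMod.cast_id]

theorem card_parking_mul (n : ℕ) :
    Nat.card {f : Fin n → Fin n // IsParkingFunction f} * (n + 1) = (n + 1) ^ n := by
  rw [Nat.card_congr (pfEquiv (n := n))]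
  exact card_Qp_mul


end Pollak

end AuxPollak

section AuxJoyal


open Finset Function

namespace Joyal

variable {n : ℕ}

/-- agreement of iterates while staying outside a set -/
lemma iterate_agree {α : Type*} (f g : α → α) (P : α → Prop)
    (h : ∀ y, ¬ P y → g y = f y) (x : α) (t : ℕ)
    (hx : ∀ j, j < t → ¬ P (f^[j] x)) : g^[t] x = f^[t] x := by
  induction t with
  | zero => rfl
  | succ t ih =>
    rw [iterate_succ_apply', iterate_succ_apply',
      ih (fun j hj => hx j (by omega)), h _ (hx t (by omega))]

lemma exists_repeat (f : Fin (n + 1) → Fin (n + 1)) (x : Fin (n + 1)) :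
    ∃ i j, i < j ∧ j ≤ n + 1 ∧ f^[i] x = f^[j] x := by
  have hcard : Fintype.card (Fin (n + 1)) < Fintype.card (Fin (n + 2)) := by simp
  obtain ⟨i, j, hne, heq⟩ := Fintype.exists_ne_map_eq_of_card_lt
    (fun i : Fin (n + 2) => f^[(i : ℕ)] x) hcard
  rcases Nat.lt_or_ge (i : ℕ) (j : ℕ) with h | h
  · exact ⟨i, j, h, by omega, heq⟩
  · have h' : (j : ℕ) < (i : ℕ) := by
      rcases Nat.lt_or_ge (j : ℕ) (i : ℕ) with h' | h'
      · exact h'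
      · exact absurd (Fin.ext (by omega)) hne
    exact ⟨j, i, h', by omega, heq.symm⟩

lemma iter_mul {α : Type*} (f : α → α) {k : ℕ} {x : α} (hx : f^[k] x = x) (c : ℕ) :
    f^[c * k] x = x := by
  induction c with
  | zero => simp
  | succ c ih => rw [Nat.succ_mul, iterate_add_apply, hx, ih]

/-- the set of periodic points -/
noncomputable def core (f : Fin (n + 1) → Fin (n + 1)) : Finset (Fin (n + 1)) :=
  @Finset.filter _ (fun x => ∃ k ∈ Finset.Icc 1 (n + 1), f^[k] x = x)
    (Classical.decPred _) univ

lemma mem_core_iff {f : Fin (n + 1) → Fin (n + 1)} {x : Fin (n + 1)} :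
    x ∈ core f ↔ ∃ k, 1 ≤ k ∧ k ≤ n + 1 ∧ f^[k] x = x := by
  simp [core, Finset.mem_Icc, and_assoc]

lemma mem_core_of_periodic {f : Fin (n + 1) → Fin (n + 1)} {x : Fin (n + 1)} {k : ℕ}
    (hk : 1 ≤ k) (hx : f^[k] x = x) : x ∈ core f := by
  obtain ⟨i, j, hij, hjn, heq⟩ := exists_repeat f x
  -- x = f^[c*k] x for all c; choose c with c*k ≥ i
  have hper : ∀ c, f^[c * k] x = x := fun c => iter_mul f hx c
  have hik : i ≤ i * k := Nat.le_mul_of_pos_right i hk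
  have h1 : f^[i * k - i] (f^[i] x) = x := by
    rw [← iterate_add_apply, Nat.sub_add_cancel hik, hper i]
  have h2 : f^[j - i] x = x := by
    have : f^[i * k - i] (f^[j] x) = x := by rw [← heq]; exact h1
    rw [← iterate_add_apply] at this
    have h3 : i * k - i + j = (j - i) + i * k := by omega
    rw [h3, iterate_add_apply, hper i] at this
    exact this
  exact mem_core_iff.mpr ⟨j - i, by omega, by omega, h2⟩

lemma core_mapsTo {f : Fin (n + 1) → Fin (n + 1)} {x : Fin (n + 1)} (hx : x ∈ core f) :
    f x ∈ core f := by
  obtain ⟨k, hk1, _, hk⟩ := mem_core_iff.mp hx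
  refine mem_core_of_periodic hk1 ?_
  rw [← iterate_succ_apply, iterate_succ_apply', hk]

lemma core_injOn {f : Fin (n + 1) → Fin (n + 1)} {x y : Fin (n + 1)}
    (hx : x ∈ core f) (hy : y ∈ core f) (hxy : f x = f y) : x = y := by
  obtain ⟨k, hk1, _, hk⟩ := mem_core_iff.mp hx
  obtain ⟨k', hk'1, _, hk'⟩ := mem_core_iff.mp hy
  have hxK : f^[k * k'] x = x := by rw [mul_comm]; exact iter_mul f hk k'
  have hyK : f^[k * k'] y = y := iter_mul f hk' k
  have hK1 : k * k' - 1 + 1 = k * k' := by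
    have : 1 ≤ k * k' := Nat.one_le_iff_ne_zero.mpr (by positivity)
    omega
  have e1 : ∀ z : Fin (n + 1), f^[k * k'] z = f^[k * k' - 1] (f z) := by
    intro z
    nth_rewrite 1 [← hK1]
    rw [iterate_succ_apply]
  rw [← hxK, e1, hxy, ← e1, hyK]

/-- every point eventually enters the core -/
lemma exists_hit (f : Fin (n + 1) → Fin (n + 1)) (x : Fin (n + 1)) :
    ∃ t, f^[t] x ∈ core f := by
  obtain ⟨i, j, hij, hjn, heq⟩ := exists_repeat f x
  refine ⟨i, mem_core_of_periodic (k := j - i) (by omega) ?_⟩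
  rw [← iterate_add_apply]
  have : j - i + i = j := by omega
  rw [this, ← heq]

lemma core_nonempty (f : Fin (n + 1) → Fin (n + 1)) : (core f).Nonempty := by
  obtain ⟨t, ht⟩ := exists_hit f 0
  exact ⟨_, ht⟩

/-- `f` maps the core onto itself -/
lemma core_image (f : Fin (n + 1) → Fin (n + 1)) : (core f).image f = core f := by
  apply Finset.eq_of_subset_of_card_le
  · intro y hy
    obtain ⟨x, hx, rfl⟩ := Finset.mem_image.mp hy
    exact core_mapsTo hx
  · rw [Finset.card_image_of_injOn (fun x hx y hy => core_injOn hx hy)]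


section dh

variable (p : Fin (n + 1) → Fin (n + 1)) (b : Fin (n + 1))

open Classical in
/-- distance to the root -/
noncomputable def dh (x : Fin (n + 1)) : ℕ :=
  if h : ∃ t, p^[t] x = b then Nat.find h else 0

variable {p b}
variable (hroot : ∀ v, p^[n + 1] v = b)
include hroot

open Classical in
lemma dh_spec (x : Fin (n + 1)) : p^[dh p b x] x = b := by
  have h : ∃ t, p^[t] x = b := ⟨n + 1, hroot x⟩
  rw [dh, dif_pos h]
  exact Nat.find_spec h

open Classical in
lemma dh_le (x : Fin (n + 1)) : dh p b x ≤ n + 1 := by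
  have h : ∃ t, p^[t] x = b := ⟨n + 1, hroot x⟩
  rw [dh, dif_pos h]
  exact Nat.find_min' h (hroot x)

open Classical in
lemma dh_min {x : Fin (n + 1)} {t : ℕ} (ht : t < dh p b x) : p^[t] x ≠ b := by
  have h : ∃ t, p^[t] x = b := ⟨n + 1, hroot x⟩
  rw [dh, dif_pos h] at ht
  exact Nat.find_min h ht

lemma root_fixed : p b = b := by
  have h1 := hroot b
  have h2 := hroot (p b)
  rw [← iterate_succ_apply, iterate_succ_apply'] at h2
  rw [h1] at h2
  exact h2

lemma iterate_root (t : ℕ) : p^[t] b = b := iterate_fixed (root_fixed hroot) t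

lemma dh_root : dh p b b = 0 := by
  rw [dh, dif_pos ⟨n + 1, hroot b⟩]
  simp

lemma eq_root_of_dh_eq_zero {x : Fin (n + 1)} (hx : dh p b x = 0) : x = b := by
  have := dh_spec hroot x
  rwa [hx] at this

lemma dh_ge (x : Fin (n + 1)) {s : ℕ} (hs : dh p b x ≤ s) : p^[s] x = b := by
  have h1 : s = (s - dh p b x) + dh p b x := by omega
  rw [h1, iterate_add_apply, dh_spec hroot, iterate_root hroot]

open Classical in
lemma dh_apply {x : Fin (n + 1)} (hx : x ≠ b) : dh p b (p x) + 1 = dh p b x := by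
  have h1 : 1 ≤ dh p b x := by
    rcases Nat.eq_zero_or_pos (dh p b x) with h | h
    · exact absurd (eq_root_of_dh_eq_zero hroot h) hx
    · omega
  have h2 : p^[dh p b x - 1] (p x) = b := by
    have h0 : dh p b x = dh p b x - 1 + 1 := by omega
    have hs := dh_spec hroot x
    rw [h0, iterate_succ_apply] at hs
    exact hs
  have h3 : dh p b (p x) ≤ dh p b x - 1 := by
    have h : ∃ t, p^[t] (p x) = b := ⟨n + 1, hroot (p x)⟩
    rw [dh, dif_pos h]
    exact Nat.find_min' h h2
  have h4 : p^[dh p b (p x) + 1] x = b := by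
    rw [iterate_succ_apply]
    exact dh_spec hroot (p x)
  have h5 : dh p b x ≤ dh p b (p x) + 1 := by
    by_contra h
    exact dh_min hroot (by omega : dh p b (p x) + 1 < dh p b x) h4
  omega

lemma dh_iterate (a : Fin (n + 1)) {i : ℕ} (hi : i ≤ dh p b a) :
    dh p b (p^[i] a) = dh p b a - i := by
  induction i with
  | zero => simp
  | succ i ih =>
    have hi' : i ≤ dh p b a := by omega
    have hne : p^[i] a ≠ b := dh_min hroot (by omega)
    have := dh_apply hroot hne
    rw [ih hi'] at this
    rw [iterate_succ_apply']
    omega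

lemma iterate_injOn (a : Fin (n + 1)) {i j : ℕ} (hi : i ≤ dh p b a) (hj : j ≤ dh p b a)
    (hij : p^[i] a = p^[j] a) : i = j := by
  have h1 := dh_iterate hroot a hi
  have h2 := dh_iterate hroot a hj
  rw [hij] at h1
  omega

end dh

section listhelpers

variable {α : Type*} [DecidableEq α] [Inhabited α]

lemma getD_indexOf {l : List α} {x : α} (hx : x ∈ l) :
    l.getD (l.idxOf x) default = x := by
  rw [List.getD_eq_getElem l default (List.idxOf_lt_length_iff.mpr hx)]
  exact List.getElem_idxOf _

lemma indexOf_getD {l : List α} (hl : l.Nodup) {j : ℕ} (hj : j < l.length) :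
    l.idxOf (l.getD j default) = j := by
  rw [List.getD_eq_getElem l default hj]
  exact hl.idxOf_getElem _ _

end listhelpers

lemma iterate_agree' {α : Type*} (f g : α → α) (P : α → Prop)
    (h : ∀ y, ¬ P y → g y = f y) (x : α) (t : ℕ)
    (hx : ∀ j, j < t → ¬ P (g^[j] x)) : g^[t] x = f^[t] x := by
  induction t with
  | zero => rfl
  | succ t ih =>
    rw [iterate_succ_apply', iterate_succ_apply',
      ih (fun j hj => hx j (by omega)), h _ (by rw [← ih (fun j hj => hx j (by omega))]; exact hx t (by omega))]

lemma cancel_injOn {α : Type*} {f : α → α} {S : Finset α}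
    (hinj : ∀ x ∈ S, ∀ y ∈ S, f x = f y → x = y)
    (hmap : ∀ x ∈ S, f x ∈ S) {x : α} (hx : x ∈ S)
    (horb : ∀ t, f^[t] x ∈ S) {i d : ℕ}
    (h : f^[i] (f^[d] x) = f^[i] x) : f^[d] x = x := by
  induction i with
  | zero => exact h
  | succ i ih =>
    apply ih
    rw [iterate_succ_apply', iterate_succ_apply'] at h
    refine hinj _ ?_ _ ?_ h
    · have := horb (i + d)
      rwa [iterate_add_apply] at this
    · exact horb i
lemma iter_mem_of_mapsTo {α : Type*} {f : α → α} {S : Finset α}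
    (hmap : ∀ x ∈ S, f x ∈ S) {x : α} (hx : x ∈ S) (t : ℕ) : f^[t] x ∈ S := by
  induction t with
  | zero => exact hx
  | succ t ih => rw [iterate_succ_apply']; exact hmap _ ih

section phi

variable (p : Fin (n + 1) → Fin (n + 1)) (b a : Fin (n + 1))

/-- the path from `a` to the root -/
noncomputable def spine : Finset (Fin (n + 1)) :=
  (range (dh p b a + 1)).image fun i => p^[i] a

/-- the spine, sorted increasingly -/
noncomputable def sp : List (Fin (n + 1)) := (spine p b a).sort (· ≤ ·)

/-- Joyal's map: doubly rooted trees to endofunctions -/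
noncomputable def PhiF : Fin (n + 1) → Fin (n + 1) := fun x =>
  if x ∈ spine p b a then p^[(sp p b a).idxOf x] a else p x

variable {p b a}

lemma mem_spine {x : Fin (n + 1)} :
    x ∈ spine p b a ↔ ∃ i, i ≤ dh p b a ∧ p^[i] a = x := by
  simp only [spine, Finset.mem_image, mem_range]
  constructor
  · rintro ⟨i, hi, rfl⟩; exact ⟨i, by omega, rfl⟩
  · rintro ⟨i, hi, rfl⟩; exact ⟨i, by omega, rfl⟩

variable (hroot : ∀ v, p^[n + 1] v = b)
include hroot

lemma card_spine : (spine p b a).card = dh p b a + 1 := by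
  rw [spine, Finset.card_image_of_injOn, Finset.card_range]
  intro i hi j hj hij
  exact iterate_injOn hroot a (by simpa using Nat.lt_succ_iff.mp (mem_range.mp hi))
    (by simpa using Nat.lt_succ_iff.mp (mem_range.mp hj)) hij

lemma b_mem_spine : b ∈ spine p b a :=
  mem_spine.mpr ⟨dh p b a, le_refl _, dh_spec hroot a⟩

lemma a_mem_spine : a ∈ spine p b a := mem_spine.mpr ⟨0, by omega, rfl⟩

lemma length_sp : (sp p b a).length = dh p b a + 1 := by
  rw [sp, Finset.length_sort]; exact card_spine hroot

lemma nodup_sp : (sp p b a).Nodup := Finset.sort_nodup _ _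

lemma mem_sp {x : Fin (n + 1)} : x ∈ sp p b a ↔ x ∈ spine p b a := Finset.mem_sort _

omit hroot in
lemma PhiF_off {x : Fin (n + 1)} (hx : x ∉ spine p b a) : PhiF p b a x = p x := by
  rw [PhiF, if_neg hx]

lemma PhiF_getD {j : ℕ} (hj : j ≤ dh p b a) :
    PhiF p b a ((sp p b a).getD j default) = p^[j] a := by
  have hjl : j < (sp p b a).length := by rw [length_sp hroot]; omega
  have hmem : (sp p b a).getD j default ∈ spine p b a := by
    rw [← mem_sp hroot]
    rw [List.getD_eq_getElem _ default hjl]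
    exact List.getElem_mem _
  rw [PhiF, if_pos hmem, indexOf_getD (nodup_sp hroot) hjl]

lemma PhiF_mem {x : Fin (n + 1)} (hx : x ∈ spine p b a) : PhiF p b a x ∈ spine p b a := by
  rw [PhiF, if_pos hx]
  have hidx : (sp p b a).idxOf x < (sp p b a).length :=
    List.idxOf_lt_length_iff.mpr ((mem_sp hroot).mpr hx)
  rw [length_sp hroot] at hidx
  exact mem_spine.mpr ⟨_, by omega, rfl⟩

lemma PhiF_injOn {x y : Fin (n + 1)} (hx : x ∈ spine p b a) (hy : y ∈ spine p b a)
    (hxy : PhiF p b a x = PhiF p b a y) : x = y := by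
  simp only [PhiF] at hxy
  rw [if_pos hx, if_pos hy] at hxy
  have hix : (sp p b a).idxOf x < (sp p b a).length :=
    List.idxOf_lt_length_iff.mpr ((mem_sp hroot).mpr hx)
  have hiy : (sp p b a).idxOf y < (sp p b a).length :=
    List.idxOf_lt_length_iff.mpr ((mem_sp hroot).mpr hy)
  have hlen := length_sp (a := a) hroot
  have heq : (sp p b a).idxOf x = (sp p b a).idxOf y :=
    iterate_injOn hroot a (by omega) (by omega) hxy
  calc x = (sp p b a).getD ((sp p b a).idxOf x) default :=
        (getD_indexOf ((mem_sp hroot).mpr hx)).symm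
    _ = (sp p b a).getD ((sp p b a).idxOf y) default := by rw [heq]
    _ = y := getD_indexOf ((mem_sp hroot).mpr hy)

lemma core_PhiF : core (PhiF p b a) = spine p b a := by
  apply Finset.Subset.antisymm
  · -- core ⊆ spine
    intro x hx
    by_contra hxs
    obtain ⟨k, hk1, hkn, hk⟩ := mem_core_iff.mp hx
    have hhit : ∃ t, (PhiF p b a)^[t] x ∈ spine p b a := by
      by_cases hcase : ∃ j, j < n + 1 ∧ (PhiF p b a)^[j] x ∈ spine p b a
      · obtain ⟨j, _, hj⟩ := hcase
        exact ⟨j, hj⟩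
      · push_neg at hcase
        refine ⟨n + 1, ?_⟩
        have hagree := iterate_agree' p (PhiF p b a) (· ∈ spine p b a)
          (fun y hy => PhiF_off hy) x (n + 1) (fun j hj => hcase j hj)
        rw [hagree, hroot x]
        exact b_mem_spine hroot
    obtain ⟨t, ht⟩ := hhit
    have h1 : (PhiF p b a)^[t * k] x = x := iter_mul _ hk t
    have h2 : t ≤ t * k := Nat.le_mul_of_pos_right t hk1
    have h3 : (PhiF p b a)^[t * k - t] ((PhiF p b a)^[t] x) = x := by
      rw [← iterate_add_apply, Nat.sub_add_cancel h2, h1]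
    have h4 := iter_mem_of_mapsTo (fun y hy => PhiF_mem hroot hy) ht (t * k - t)
    rw [h3] at h4
    exact hxs h4
  · -- spine ⊆ core
    intro x hx
    obtain ⟨i, j, hij, hjn, heq⟩ := exists_repeat (PhiF p b a) x
    have hd : (PhiF p b a)^[j - i] x = x := by
      apply cancel_injOn (fun u hu v hv => PhiF_injOn hroot hu hv)
        (fun u hu => PhiF_mem hroot hu) hx
        (iter_mem_of_mapsTo (fun u hu => PhiF_mem hroot hu) hx)
      rw [← iterate_add_apply]
      have : i + (j - i) = j := by omega
      rw [this, ← heq]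
    exact mem_core_of_periodic (by omega) hd

end phi

section psi

variable (f : Fin (n + 1) → Fin (n + 1))

/-- images of the sorted core: the spine order -/
noncomputable def wL : List (Fin (n + 1)) := ((core f).sort (· ≤ ·)).map f

/-- Joyal's map: endofunction to rooted parent map -/
noncomputable def PsiP : Fin (n + 1) → Fin (n + 1) := fun x =>
  if x ∈ core f then
    (if (wL f).idxOf x + 1 < (core f).card
      then (wL f).getD ((wL f).idxOf x + 1) default else x)
  else f x

noncomputable def PsiB : Fin (n + 1) := (wL f).getD ((core f).card - 1) default
noncomputable def PsiA : Fin (n + 1) := (wL f).getD 0 default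

variable {f}

lemma length_wL : (wL f).length = (core f).card := by
  rw [wL, List.length_map, Finset.length_sort]

lemma nodup_wL : (wL f).Nodup := by
  refine List.Nodup.map_on ?_ (Finset.sort_nodup _ _)
  intro x hx y hy hxy
  exact core_injOn ((Finset.mem_sort _).mp hx) ((Finset.mem_sort _).mp hy) hxy

lemma mem_wL {x : Fin (n + 1)} : x ∈ wL f ↔ x ∈ core f := by
  rw [wL, List.mem_map]
  constructor
  · rintro ⟨y, hy, rfl⟩
    exact core_mapsTo ((Finset.mem_sort _).mp hy)
  · intro hx
    have : x ∈ (core f).image f := by rw [core_image]; exact hx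
    obtain ⟨y, hy, rfl⟩ := Finset.mem_image.mp this
    exact ⟨y, (Finset.mem_sort _).mpr hy, rfl⟩

lemma kpos : 0 < (core f).card := Finset.card_pos.mpr (core_nonempty f)

lemma kle : (core f).card ≤ n + 1 := by
  have := Finset.card_le_card (Finset.subset_univ (core f))
  simpa using this

lemma wfun_mem {j : ℕ} (hj : j < (core f).card) : (wL f).getD j default ∈ core f := by
  rw [← mem_wL]
  rw [List.getD_eq_getElem _ default (by rw [length_wL]; omega)]
  exact List.getElem_mem _

lemma PsiP_off {x : Fin (n + 1)} (hx : x ∉ core f) : PsiP f x = f x := by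
  rw [PsiP, if_neg hx]

lemma PsiP_getD {j : ℕ} (hj : j < (core f).card) :
    PsiP f ((wL f).getD j default)
      = (wL f).getD (min (j + 1) ((core f).card - 1)) default := by
  have hjl : j < (wL f).length := by rw [length_wL]; omega
  have hidx : (wL f).idxOf ((wL f).getD j default) = j := indexOf_getD nodup_wL hjl
  rw [PsiP, if_pos (wfun_mem hj), hidx]
  by_cases h : j + 1 < (core f).card
  · rw [if_pos h]
    congr 1
    omega
  · rw [if_neg h]
    have : min (j + 1) ((core f).card - 1) = j := by omega
    rw [this]

lemma PsiP_iter {j : ℕ} (hj : j < (core f).card) (t : ℕ) :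
    (PsiP f)^[t] ((wL f).getD j default)
      = (wL f).getD (min (j + t) ((core f).card - 1)) default := by
  induction t with
  | zero =>
    simp only [iterate_zero, id_eq]
    congr 1
    omega
  | succ t ih =>
    rw [iterate_succ_apply', ih]
    rw [PsiP_getD (by have := kpos (f := f); omega)]
    congr 1
    omega

lemma rooted_PsiP (x : Fin (n + 1)) : (PsiP f)^[n + 1] x = PsiB f := by
  by_cases hx : x ∈ core f
  · have hxm : x ∈ wL f := mem_wL.mpr hx
    have hidx : (wL f).idxOf x < (core f).card := by
      have := List.idxOf_lt_length_iff.mpr hxm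
      rwa [length_wL] at this
    have hrec : (wL f).getD ((wL f).idxOf x) default = x := getD_indexOf hxm
    rw [← hrec, PsiP_iter hidx]
    rw [PsiB]
    congr 1
    have := kle (f := f)
    omega
  · set T := Nat.find (exists_hit f x) with hT
    have hTspec : f^[T] x ∈ core f := Nat.find_spec (exists_hit f x)
    have hTmin : ∀ j, j < T → f^[j] x ∉ core f := fun j hj => Nat.find_min _ hj
    -- pre-orbit is injective, hence T + card core ≤ n + 1
    have hinj : ∀ i j, i < T → j < T → f^[i] x = f^[j] x → i = j := by
      intro i j hi hj hij
      by_contra hne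
      rcases Nat.lt_or_ge i j with h | h
      · exact hTmin i hi (mem_core_of_periodic (k := j - i) (by omega)
          (by rw [← iterate_add_apply]
              have : j - i + i = j := by omega
              rw [this, ← hij]))
      · have h' : j < i := by omega
        exact hTmin j hj (mem_core_of_periodic (k := i - j) (by omega)
          (by rw [← iterate_add_apply]
              have : i - j + j = i := by omega
              rw [this, hij]))
    have hcard : T + (core f).card ≤ n + 1 := by
      have hsub : (range T).image (fun j => f^[j] x) ⊆ univ \ core f := by
        intro y hy
        obtain ⟨j, hj, rfl⟩ := Finset.mem_image.mp hy
        rw [Finset.mem_sdiff]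
        exact ⟨Finset.mem_univ _, hTmin j (mem_range.mp hj)⟩
      have hc1 : ((range T).image (fun j => f^[j] x)).card = T := by
        rw [Finset.card_image_of_injOn, Finset.card_range]
        intro i hi j hj hij
        exact hinj i j (mem_range.mp hi) (mem_range.mp hj) hij
      have hc2 := Finset.card_le_card hsub
      rw [hc1, Finset.card_sdiff_of_subset (Finset.subset_univ _)] at hc2
      simp only [Finset.card_univ, Fintype.card_fin] at hc2
      have := kle (f := f)
      omega
    have hagree : (PsiP f)^[T] x = f^[T] x :=
      iterate_agree f (PsiP f) (· ∈ core f) (fun y hy => PsiP_off hy) x T hTmin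
    have hTle : T ≤ n + 1 := by
      obtain ⟨i, j, hij, hjn, heq⟩ := exists_repeat f x
      have hc : f^[i] x ∈ core f := mem_core_of_periodic (k := j - i) (by omega) (by
        rw [← iterate_add_apply]
        have h' : j - i + i = j := by omega
        rw [h', ← heq])
      have := Nat.find_min' (exists_hit f x) hc
      omega
    have hsplit : (PsiP f)^[n + 1] x = (PsiP f)^[n + 1 - T] ((PsiP f)^[T] x) := by
      rw [← iterate_add_apply]
      congr 1
      omega
    have hi0m : f^[T] x ∈ wL f := mem_wL.mpr hTspec
    have hi0 : (wL f).idxOf (f^[T] x) < (core f).card := by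
      have := List.idxOf_lt_length_iff.mpr hi0m
      rwa [length_wL] at this
    have hrec : (wL f).getD ((wL f).idxOf (f^[T] x)) default = f^[T] x :=
      getD_indexOf hi0m
    rw [hsplit, hagree, ← hrec, PsiP_iter hi0, PsiB]
    congr 1
    omega
end psi

section roundtrip1
-- `Phi (Psi f) = f`

variable {f : Fin (n + 1) → Fin (n + 1)}

lemma w_inj {i j : ℕ} (hi : i < (core f).card) (hj : j < (core f).card)
    (hij : (wL f).getD i default = (wL f).getD j default) : i = j := by
  have h1 := indexOf_getD (nodup_wL (f := f)) (by rw [length_wL]; omega : i < (wL f).length)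
  have h2 := indexOf_getD (nodup_wL (f := f)) (by rw [length_wL]; omega : j < (wL f).length)
  rw [← h1, ← h2, hij]

lemma dh_w {j : ℕ} (hj : j < (core f).card) :
    dh (PsiP f) (PsiB f) ((wL f).getD j default) = (core f).card - 1 - j := by
  have hroot := rooted_PsiP (f := f)
  have hup : (PsiP f)^[(core f).card - 1 - j] ((wL f).getD j default) = PsiB f := by
    rw [PsiP_iter hj, PsiB]
    congr 1
    omega
  apply le_antisymm
  · by_contra h
    exact dh_min hroot (by omega) hup
  · by_contra h
    have hspec := dh_spec hroot ((wL f).getD j default)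
    rw [PsiP_iter hj] at hspec
    have hPsiB : PsiB f = (wL f).getD ((core f).card - 1) default := rfl
    have := w_inj (f := f) (by have := kpos (f := f); omega)
      (by have := kpos (f := f); omega) (hspec.trans hPsiB)
    omega

lemma dh_PsiA : dh (PsiP f) (PsiB f) (PsiA f) = (core f).card - 1 := by
  have := dh_w (f := f) (kpos (f := f))
  rw [PsiA]
  omega

lemma iter_PsiA {i : ℕ} (hi : i < (core f).card) :
    (PsiP f)^[i] (PsiA f) = (wL f).getD i default := by
  rw [PsiA, PsiP_iter (kpos (f := f))]
  congr 1
  omega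

lemma spine_Psi : spine (PsiP f) (PsiB f) (PsiA f) = core f := by
  ext x
  rw [mem_spine, dh_PsiA]
  constructor
  · rintro ⟨i, hi, rfl⟩
    rw [iter_PsiA (by have := kpos (f := f); omega)]
    exact wfun_mem (by have := kpos (f := f); omega)
  · intro hx
    have hxm : x ∈ wL f := mem_wL.mpr hx
    have hidx : (wL f).idxOf x < (core f).card := by
      have := List.idxOf_lt_length_iff.mpr hxm
      rwa [length_wL] at this
    refine ⟨(wL f).idxOf x, by omega, ?_⟩
    rw [iter_PsiA hidx]
    exact getD_indexOf hxm

lemma Phi_Psi : PhiF (PsiP f) (PsiB f) (PsiA f) = f := by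
  funext x
  by_cases hx : x ∈ core f
  · have hxs : x ∈ spine (PsiP f) (PsiB f) (PsiA f) := by rw [spine_Psi]; exact hx
    rw [PhiF, if_pos hxs]
    have hsp : sp (PsiP f) (PsiB f) (PsiA f) = (core f).sort (· ≤ ·) := by
      rw [sp, spine_Psi]
    rw [hsp]
    have hxm : x ∈ (core f).sort (· ≤ ·) := (Finset.mem_sort _).mpr hx
    have hidx : ((core f).sort (· ≤ ·)).idxOf x < (core f).card := by
      have := List.idxOf_lt_length_iff.mpr hxm
      rwa [Finset.length_sort] at this
    rw [iter_PsiA hidx]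
    rw [wL, List.getD_eq_getElem _ default
      (by rw [List.length_map, Finset.length_sort]; exact hidx), List.getElem_map,
      ← List.getD_eq_getElem _ default
        (by rw [Finset.length_sort]; exact hidx)]
    rw [getD_indexOf hxm]
  · have hxs : x ∉ spine (PsiP f) (PsiB f) (PsiA f) := by rw [spine_Psi]; exact hx
    rw [PhiF_off hxs, PsiP_off hx]

end roundtrip1

section roundtrip2
-- `Psi (Phi (p, b, a)) = (p, b, a)`

variable {p : Fin (n + 1) → Fin (n + 1)} {b a : Fin (n + 1)}
variable (hroot : ∀ v, p^[n + 1] v = b)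
include hroot

lemma card_core_PhiF : (core (PhiF p b a)).card = dh p b a + 1 := by
  rw [core_PhiF hroot, card_spine hroot]

lemma sort_core_PhiF : (core (PhiF p b a)).sort (· ≤ ·) = sp p b a := by
  rw [core_PhiF hroot, sp]

lemma wL_PhiF {j : ℕ} (hj : j ≤ dh p b a) :
    (wL (PhiF p b a)).getD j default = p^[j] a := by
  have hjl : j < (sp p b a).length := by rw [length_sp hroot]; omega
  rw [wL, sort_core_PhiF hroot]
  rw [List.getD_eq_getElem _ default (by rw [List.length_map]; exact hjl),
    List.getElem_map, ← List.getD_eq_getElem _ default hjl]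
  exact PhiF_getD hroot hj

lemma PsiB_PhiF : PsiB (PhiF p b a) = b := by
  rw [PsiB, card_core_PhiF hroot]
  have h := wL_PhiF (a := a) hroot (le_refl (dh p b a))
  have he : dh p b a + 1 - 1 = dh p b a := by omega
  rw [he, h]
  exact dh_spec hroot a

lemma PsiA_PhiF : PsiA (PhiF p b a) = a := by
  rw [PsiA]
  have h := wL_PhiF (a := a) hroot (Nat.zero_le _)
  rw [h]
  simp

lemma PsiP_PhiF : PsiP (PhiF p b a) = p := by
  funext x
  by_cases hx : x ∈ core (PhiF p b a)
  · have hxs : x ∈ spine p b a := by rw [← core_PhiF hroot]; exact hx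
    obtain ⟨i, hi, rfl⟩ := mem_spine.mp hxs
    have hwi : (wL (PhiF p b a)).getD i default = p^[i] a := wL_PhiF hroot hi
    have hil : i < (wL (PhiF p b a)).length := by
      rw [length_wL, card_core_PhiF hroot]; omega
    have hidx : (wL (PhiF p b a)).idxOf (p^[i] a) = i := by
      rw [← hwi]
      exact indexOf_getD nodup_wL hil
    rw [PsiP, if_pos hx, hidx, card_core_PhiF hroot]
    by_cases hcase : i + 1 < dh p b a + 1
    · rw [if_pos hcase, wL_PhiF hroot (by omega), iterate_succ_apply']
    · rw [if_neg hcase]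
      have hieq : i = dh p b a := by omega
      rw [hieq, dh_spec hroot a, root_fixed hroot]
  · have hxs : x ∉ spine p b a := by rw [← core_PhiF hroot]; exact hx
    rw [PsiP_off hx, PhiF_off hxs]

end roundtrip2

section count

/-- Joyal's bijection -/
noncomputable def joyalEquiv :
    (Fin (n + 1) → Fin (n + 1)) ≃
      {q : (Fin (n + 1) → Fin (n + 1)) × Fin (n + 1) × Fin (n + 1) //
        ∀ v, q.1^[n + 1] v = q.2.1} where
  toFun f := ⟨(PsiP f, PsiB f, PsiA f), fun v => rooted_PsiP v⟩
  invFun q := PhiF q.1.1 q.1.2.1 q.1.2.2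
  left_inv f := Phi_Psi
  right_inv q := by
    obtain ⟨⟨p, b, a⟩, h⟩ := q
    apply Subtype.ext
    simp only
    rw [PsiP_PhiF h, PsiB_PhiF h, PsiA_PhiF h]

lemma conj_iterate (σ : Equiv.Perm (Fin (n + 1))) (p : Fin (n + 1) → Fin (n + 1))
    (t : ℕ) (x : Fin (n + 1)) :
    (fun y => σ (p (σ.symm y)))^[t] x = σ (p^[t] (σ.symm x)) := by
  induction t generalizing x with
  | zero => simp
  | succ t ih =>
    rw [iterate_succ_apply, ih, iterate_succ_apply]
    simp

/-- conjugating by the swap `0 ↔ b` -/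
noncomputable def conjEquiv (b : Fin (n + 1)) :
    {p : Fin (n + 1) → Fin (n + 1) // ∀ v, p^[n + 1] v = b} ≃
      {p : Fin (n + 1) → Fin (n + 1) // ∀ v, p^[n + 1] v = 0} where
  toFun q := ⟨fun y => (Equiv.swap (0 : Fin (n + 1)) b) (q.1 ((Equiv.swap (0 : Fin (n + 1)) b) y)), by
    intro v
    have h := conj_iterate (Equiv.swap (0 : Fin (n + 1)) b) q.1 (n + 1) v
    rw [Equiv.symm_swap] at h
    rw [h, q.2]
    simp⟩
  invFun q := ⟨fun y => (Equiv.swap (0 : Fin (n + 1)) b) (q.1 ((Equiv.swap (0 : Fin (n + 1)) b) y)), by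
    intro v
    have h := conj_iterate (Equiv.swap (0 : Fin (n + 1)) b) q.1 (n + 1) v
    rw [Equiv.symm_swap] at h
    rw [h, q.2]
    simp⟩
  left_inv q := by
    apply Subtype.ext
    funext y
    simp
  right_inv q := by
    apply Subtype.ext
    funext y
    simp

noncomputable def splitEquiv :
    {q : (Fin (n + 1) → Fin (n + 1)) × Fin (n + 1) × Fin (n + 1) //
        ∀ v, q.1^[n + 1] v = q.2.1} ≃
      ({p : Fin (n + 1) → Fin (n + 1) // ∀ v, p^[n + 1] v = 0} ×
        Fin (n + 1) × Fin (n + 1)) where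
  toFun q := (conjEquiv q.1.2.1 ⟨q.1.1, q.2⟩, q.1.2.1, q.1.2.2)
  invFun r := ⟨(((conjEquiv r.2.1).symm r.1).1, r.2.1, r.2.2),
    ((conjEquiv r.2.1).symm r.1).2⟩
  left_inv q := by
    obtain ⟨⟨p, b, a⟩, h⟩ := q
    apply Subtype.ext
    simp only [Equiv.symm_apply_apply]
  right_inv r := by
    obtain ⟨q, b, a⟩ := r
    change ((conjEquiv b) ((conjEquiv b).symm q), b, a) = (q, b, a)
    rw [Equiv.apply_symm_apply]

theorem card_rooted :
    Nat.card {p : Fin (n + 1) → Fin (n + 1) // ∀ v, p^[n + 1] v = 0} *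
      ((n + 1) * (n + 1)) = (n + 1) ^ (n + 1) := by
  have h1 := Nat.card_congr ((joyalEquiv (n := n)).trans splitEquiv)
  rw [Nat.card_prod, Nat.card_prod] at h1
  have h2 : Nat.card (Fin (n + 1) → Fin (n + 1)) = (n + 1) ^ (n + 1) := by
    rw [Nat.card_eq_fintype_card, Fintype.card_fun, Fintype.card_fin]
  have h3 : Nat.card (Fin (n + 1)) = n + 1 := by
    rw [Nat.card_eq_fintype_card, Fintype.card_fin]
  rw [h2, h3] at h1
  exact h1.symm

end count

end Joyal

end AuxJoyal

section AuxTree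

open Finset Function SimpleGraph Walk

namespace TreeCorr

open Joyal

variable {n : ℕ}

/-- the graph of a parent map -/
def Gp (p : Fin (n + 1) → Fin (n + 1)) : SimpleGraph (Fin (n + 1)) :=
  SimpleGraph.fromRel (fun u v => p u = v)

lemma Gp_adj {p : Fin (n + 1) → Fin (n + 1)} {u v : Fin (n + 1)} :
    (Gp p).Adj u v ↔ u ≠ v ∧ (p u = v ∨ p v = u) := SimpleGraph.fromRel_adj _ _ _

section rooted

variable {p : Fin (n + 1) → Fin (n + 1)} (hroot : ∀ v, p^[n + 1] v = 0)
include hroot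

lemma p_ne_self {v : Fin (n + 1)} (hv : v ≠ 0) : p v ≠ v := by
  intro h
  exact hv (by rw [← hroot v, iterate_fixed h])

lemma adj_parent {v : Fin (n + 1)} (hv : v ≠ 0) : (Gp p).Adj v (p v) :=
  Gp_adj.mpr ⟨fun h => p_ne_self hroot hv h.symm, Or.inl rfl⟩

/-- the canonical walk from `v` to the root `0` -/
noncomputable def pwalk (hroot : ∀ v, p^[n + 1] v = 0) :
    (k : ℕ) → (v : Fin (n + 1)) → dh p 0 v ≤ k → (Gp p).Walk v 0
  | 0, v, h =>
      (Walk.nil' (0 : Fin (n + 1))).copy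
        ((eq_root_of_dh_eq_zero hroot (by omega)).symm) rfl
  | (k + 1), v, h =>
      if hv : v = 0 then (Walk.nil' (0 : Fin (n + 1))).copy hv.symm rfl
      else Walk.cons (adj_parent hroot hv)
        (pwalk hroot k (p v) (by have := dh_apply hroot hv; omega))

lemma pwalk_support {k : ℕ} {v : Fin (n + 1)} (h : dh p 0 v ≤ k) :
    ∀ x ∈ (pwalk hroot k v h).support, dh p 0 x ≤ dh p 0 v := by
  induction k generalizing v with
  | zero =>
    intro x hx
    rw [pwalk] at hx
    simp only [Walk.support_copy, Walk.support_nil, List.mem_singleton] at hx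
    have hv0 : v = 0 := eq_root_of_dh_eq_zero hroot (by omega)
    rw [hx, ← hv0]
  | succ k ih =>
    intro x hx
    rw [pwalk] at hx
    by_cases hv : v = 0
    · rw [dif_pos hv] at hx
      simp only [Walk.support_copy, Walk.support_nil, List.mem_singleton] at hx
      rw [hx, ← hv]
    · rw [dif_neg hv] at hx
      rw [Walk.support_cons] at hx
      rcases List.mem_cons.mp hx with rfl | h1
      · exact le_refl _
      · have h2 := ih (by have := dh_apply hroot hv; omega) x h1
        have := dh_apply hroot hv
        omega

lemma pwalk_isPath {k : ℕ} {v : Fin (n + 1)} (h : dh p 0 v ≤ k) :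
    (pwalk hroot k v h).IsPath := by
  induction k generalizing v with
  | zero =>
    rw [pwalk]
    simp
  | succ k ih =>
    rw [pwalk]
    by_cases hv : v = 0
    · rw [dif_pos hv]
      simp
    · rw [dif_neg hv]
      rw [Walk.cons_isPath_iff]
      refine ⟨ih _, ?_⟩
      intro hmem
      have h1 := pwalk_support hroot (by have := dh_apply hroot hv; omega) v hmem
      have h2 := dh_apply hroot hv
      have h3 : dh p 0 v ≠ 0 := fun h0 => hv (eq_root_of_dh_eq_zero hroot h0)
      omega

lemma pwalk_getVert {k : ℕ} {v : Fin (n + 1)} (h : dh p 0 v ≤ k) (hv : v ≠ 0) :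
    (pwalk hroot k v h).getVert 1 = p v := by
  cases k with
  | zero =>
    exact absurd (eq_root_of_dh_eq_zero hroot (by omega)) hv
  | succ k =>
    rw [pwalk, dif_neg hv]
    rw [Walk.getVert_cons_succ, Walk.getVert_zero]

lemma Gp_connected : (Gp p).Connected := by
  have hreach : ∀ (v : Fin (n + 1)), (Gp p).Reachable v 0 :=
    fun v => (pwalk hroot (dh p 0 v) v (le_refl _)).reachable
  rw [SimpleGraph.connected_iff]
  exact ⟨fun u v => (hreach u).trans (hreach v).symm, ⟨0⟩⟩

omit hroot in
/-- index injectivity along a path -/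
lemma path_getVert_inj {V : Type*} {G : SimpleGraph V} {u v : V} {w : G.Walk u v}
    (hw : w.IsPath) : ∀ {i j : ℕ}, i ≤ w.length → j ≤ w.length →
      w.getVert i = w.getVert j → i = j := by
  induction w with
  | nil => intro i j hi hj _; simp only [Walk.length_nil, Nat.le_zero] at hi hj; omega
  | cons hadj q ih =>
    intro i j hi hj hij
    rw [Walk.cons_isPath_iff] at hw
    match i, j with
    | 0, 0 => rfl
    | 0, (j + 1) =>
      exfalso
      rw [Walk.getVert_zero, Walk.getVert_cons_succ] at hij
      apply hw.2
      rw [Walk.mem_support_iff_exists_getVert]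
      exact ⟨j, hij.symm, by simpa using hj⟩
    | (i + 1), 0 =>
      exfalso
      rw [Walk.getVert_zero, Walk.getVert_cons_succ] at hij
      apply hw.2
      rw [Walk.mem_support_iff_exists_getVert]
      exact ⟨i, hij, by simpa using hi⟩
    | (i + 1), (j + 1) =>
      rw [Walk.getVert_cons_succ, Walk.getVert_cons_succ] at hij
      have := ih hw.1 (by simpa using hi) (by simpa using hj) hij
      omega

lemma max_parent {u w : Fin (n + 1)} {l : List (Fin (n + 1))}
    (hmax : ∀ x ∈ l, dh p 0 x ≤ dh p 0 u)
    (hadj : (Gp p).Adj u w) (hw : w ∈ l) : p u = w := by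
  obtain ⟨hne, h | h⟩ := Gp_adj.mp hadj
  · exact h
  · exfalso
    by_cases hw0 : w = 0
    · subst hw0
      rw [root_fixed hroot] at h
      exact hne h.symm
    · have := dh_apply hroot hw0
      rw [h] at this
      have := hmax w hw
      omega

lemma Gp_acyclic : (Gp p).IsAcyclic := by
  intro v c hc
  -- pick the vertex of maximal height on the cycle
  obtain ⟨u, hu, hmax⟩ := Finset.exists_max_image c.support.toFinset (dh p 0)
    ⟨v, by simp [Walk.start_mem_support]⟩
  rw [List.mem_toFinset] at hu
  have hmax' : ∀ x ∈ c.support, dh p 0 x ≤ dh p 0 u := fun x hx =>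
    hmax x (List.mem_toFinset.mpr hx)
  -- rotate the cycle to start at `u`
  have hc' := hc.rotate (u := u) hu
  set c' := c.rotate u hu with hc'def
  have hsupp : ∀ x ∈ c'.support, x ∈ c.support := by
    intro x hx
    rw [Walk.support_eq_cons] at hx
    rcases List.mem_cons.mp hx with rfl | hx
    · exact hu
    · have hrot := Walk.support_rotate c u hu
      have := hrot.mem_iff.mp hx
      rw [Walk.support_eq_cons c]
      exact List.mem_cons_of_mem _ this
  cases hq : c' with
  | nil =>
    rw [hq] at hc'
    have := hc'.three_le_length
    simp at this
  | cons hadj q =>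
    rw [hq] at hc'
    have hlen : 2 ≤ q.length := by
      have := hc'.three_le_length
      simpa using this
    have hqpath : q.IsPath := by
      rw [Walk.isPath_def]
      have := hc'.2
      simpa using this
    -- first neighbour
    have hw1 : p u = q.getVert 0 := by
      refine max_parent hroot hmax' ?_ (hsupp _ ?_)
      · rw [Walk.getVert_zero]; exact hadj
      · rw [hq, Walk.support_cons, Walk.getVert_zero]
        exact List.mem_cons_of_mem _ q.start_mem_support
    -- last neighbour
    have hrevnil : ¬ q.reverse.Nil := by
      rw [Walk.not_nil_iff_lt_length, Walk.length_reverse]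
      omega
    have hw2 : p u = q.reverse.getVert 1 := by
      refine max_parent hroot hmax' (q.reverse.adj_snd hrevnil) (hsupp _ ?_)
      rw [hq, Walk.support_cons]
      apply List.mem_cons_of_mem
      have hm : q.reverse.getVert 1 ∈ q.reverse.support := by
        rw [Walk.mem_support_iff_exists_getVert]
        exact ⟨1, rfl, by rw [Walk.length_reverse]; omega⟩
      rwa [Walk.support_reverse, List.mem_reverse] at hm
    rw [Walk.getVert_reverse] at hw2
    have heq : q.getVert 0 = q.getVert (q.length - 1) := by rw [← hw1, hw2]
    have := path_getVert_inj hqpath (by omega) (by omega) heq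
    omega

end rooted

section parent

variable (T : SimpleGraph (Fin (n + 1))) (hT : T.Connected ∧ T.IsAcyclic)

/-- the unique path from `v` to `0` in a tree -/
noncomputable def tpath (v : Fin (n + 1)) : T.Walk v 0 :=
  ((SimpleGraph.IsTree.mk hT.1 hT.2).existsUnique_path v 0).choose

lemma tpath_isPath (v : Fin (n + 1)) : (tpath T hT v).IsPath :=
  ((SimpleGraph.IsTree.mk hT.1 hT.2).existsUnique_path v 0).choose_spec.1

lemma tpath_unique {v : Fin (n + 1)} (w : T.Walk v 0) (hw : w.IsPath) :
    w = tpath T hT v :=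
  ((SimpleGraph.IsTree.mk hT.1 hT.2).existsUnique_path v 0).choose_spec.2 w hw

/-- the parent map of a tree, towards the root `0` -/
noncomputable def parent : Fin (n + 1) → Fin (n + 1) := fun v =>
  (tpath T hT v).getVert 1

lemma tpath_zero : tpath T hT 0 = Walk.nil :=
  Walk.isPath_iff_eq_nil.mp (tpath_isPath T hT 0)

lemma parent_zero : parent T hT 0 = 0 := by
  rw [parent, tpath_zero]
  exact Walk.getVert_of_length_le _ (by simp)

lemma tpath_not_nil {v : Fin (n + 1)} (hv : v ≠ 0) : ¬ (tpath T hT v).Nil := by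
  rw [Walk.not_nil_iff_lt_length]
  rcases Nat.eq_zero_or_pos (tpath T hT v).length with h | h
  · exact absurd (Walk.eq_of_length_eq_zero h) hv
  · exact h

lemma parent_adj {v : Fin (n + 1)} (hv : v ≠ 0) : T.Adj v (parent T hT v) :=
  (tpath T hT v).adj_snd (tpath_not_nil T hT hv)

lemma tpath_parent {v : Fin (n + 1)} (hv : v ≠ 0) :
    tpath T hT (parent T hT v) = ((tpath T hT v).tail).copy rfl rfl := by
  refine (tpath_unique T hT _ ?_).symm
  refine (Walk.isPath_copy _ _ _).mpr ?_
  exact (tpath_isPath T hT v).tail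

lemma length_tpath_parent {v : Fin (n + 1)} (hv : v ≠ 0) :
    (tpath T hT (parent T hT v)).length + 1 = (tpath T hT v).length := by
  rw [tpath_parent T hT hv]
  exact (congrArg (· + 1) (Walk.length_copy _ _ _)).trans
    (Walk.length_tail_add_one (tpath_not_nil T hT hv))

lemma parent_rooted : ∀ v, (parent T hT)^[n + 1] v = 0 := by
  have aux : ∀ (k : ℕ) (v : Fin (n + 1)), (tpath T hT v).length ≤ k →
      (parent T hT)^[k] v = 0 := by
    intro k
    induction k with
    | zero =>
      intro v hv
      simp only [Function.iterate_zero, id_eq]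
      exact Walk.eq_of_length_eq_zero (p := tpath T hT v) (by omega)
    | succ k ih =>
      intro v hv
      by_cases hv0 : v = 0
      · subst hv0
        exact Function.iterate_fixed (parent_zero T hT) _
      · rw [Function.iterate_succ_apply]
        apply ih
        have := length_tpath_parent T hT hv0
        omega
  intro v
  apply aux
  have := (tpath_isPath T hT v).length_lt
  simp only [Fintype.card_fin] at this
  omega

end parent

section roundtrips

lemma parent_Gp {p : Fin (n + 1) → Fin (n + 1)} (hroot : ∀ v, p^[n + 1] v = 0)
    (hT : (Gp p).Connected ∧ (Gp p).IsAcyclic) : parent (Gp p) hT = p := by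
  funext v
  by_cases hv : v = 0
  · subst hv
    rw [parent_zero]
    exact (root_fixed hroot).symm
  · have hP := pwalk_isPath hroot (le_refl (dh p 0 v))
    have he := tpath_unique (Gp p) hT _ hP
    rw [parent, ← he]
    exact pwalk_getVert hroot _ hv

lemma Gp_parent (T : SimpleGraph (Fin (n + 1))) (hT : T.Connected ∧ T.IsAcyclic) :
    Gp (parent T hT) = T := by
  ext u v
  rw [Gp_adj]
  constructor
  · rintro ⟨hne, h | h⟩
    · have hu : u ≠ 0 := by
        rintro rfl
        rw [parent_zero] at h
        exact hne h
      rw [← h]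
      exact parent_adj T hT hu
    · have hv : v ≠ 0 := by
        rintro rfl
        rw [parent_zero] at h
        exact hne h.symm
      rw [← h]
      exact (parent_adj T hT hv).symm
  · intro hadj
    refine ⟨hadj.ne, ?_⟩
    by_cases hu : u ∈ (tpath T hT v).support
    · right
      have hq : ((tpath T hT v).takeUntil u hu).IsPath :=
        (tpath_isPath T hT v).takeUntil hu
      have hs : (Walk.cons hadj.symm Walk.nil : T.Walk v u).IsPath := by
        rw [Walk.cons_isPath_iff]
        exact ⟨Walk.IsPath.nil, by simp [hadj.ne']⟩
      have hqs : (tpath T hT v).takeUntil u hu = Walk.cons hadj.symm Walk.nil :=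
        ((SimpleGraph.IsTree.mk hT.1 hT.2).existsUnique_path v u).unique hq hs
      have hspec := (tpath T hT v).take_spec hu
      rw [parent, ← hspec, hqs, Walk.cons_append, Walk.nil_append,
        Walk.getVert_cons_succ, Walk.getVert_zero]
    · left
      have hw : (Walk.cons hadj (tpath T hT v)).IsPath := by
        rw [Walk.cons_isPath_iff]
        exact ⟨tpath_isPath T hT v, hu⟩
      have := tpath_unique T hT _ hw
      rw [parent, ← this, Walk.getVert_cons_succ, Walk.getVert_zero]

end roundtrips

/-- trees on `Fin (n+1)` are equivalent to rooted parent maps -/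
noncomputable def treeEquiv :
    {T : SimpleGraph (Fin (n + 1)) // T.Connected ∧ T.IsAcyclic} ≃
      {p : Fin (n + 1) → Fin (n + 1) // ∀ v, p^[n + 1] v = 0} where
  toFun T := ⟨parent T.1 T.2, parent_rooted T.1 T.2⟩
  invFun p := ⟨Gp p.1, Gp_connected p.2, Gp_acyclic p.2⟩
  left_inv T := Subtype.ext (Gp_parent T.1 T.2)
  right_inv p := Subtype.ext (parent_Gp p.2 _)

end TreeCorr

end AuxTree

/-- The number of parking functions on `m-1` cars equals the number of labeled
(Cayley) trees on `m` vertices, and both are equal to `m^(m-2)`. -/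

theorem card_parkingFunctions_eq_card_trees (m : ℕ) (hm : 1 ≤ m) :
    Nat.card {f : Fin (m - 1) → Fin (m - 1) // IsParkingFunction f} =
        Nat.card {T : SimpleGraph (Fin m) // T.Connected ∧ T.IsAcyclic} ∧
      Nat.card {f : Fin (m - 1) → Fin (m - 1) // IsParkingFunction f} =
        m ^ (m - 2) := by
  obtain ⟨n, rfl⟩ : ∃ n, m = n + 1 := ⟨m - 1, by omega⟩
  have hsub : n + 1 - 1 = n := by omega
  rw [hsub]
  have hpark := Pollak.card_parking_mul n
  have htree : Nat.card {T : SimpleGraph (Fin (n + 1)) // T.Connected ∧ T.IsAcyclic}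
      = Nat.card {p : Fin (n + 1) → Fin (n + 1) // ∀ v, p^[n + 1] v = 0} :=
    Nat.card_congr TreeCorr.treeEquiv
  have hroot := Joyal.card_rooted (n := n)
  have hpos : 0 < (n + 1) * (n + 1) := by positivity
  constructor
  · apply Nat.eq_of_mul_eq_mul_right hpos
    rw [htree, hroot]
    have h1 : Nat.card {f : Fin n → Fin n // IsParkingFunction f} * ((n + 1) * (n + 1))
        = (Nat.card {f : Fin n → Fin n // IsParkingFunction f} * (n + 1)) * (n + 1) := by
      ring
    rw [h1, hpark, ← pow_succ]
  · cases n with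
    | zero =>
      simp only [Nat.zero_add] at hpark ⊢
      have : (1 : ℕ) ^ (1 - 2) = 1 := by norm_num
      rw [this]
      omega
    | succ k =>
      have hexp : k + 1 + 1 - 2 = k := by omega
      rw [hexp]
      apply Nat.eq_of_mul_eq_mul_right (show 0 < k + 2 by omega)
      rw [hpark, ← pow_succ]
end

section
/- Let G be an LLT graph on vertex set V with a vertex j such that j+1 ∈ V, no edges between j and j+1, and for every vertex v ∉ {j, j+1}, the pair (j, v) is an edge of a given type (respectively (v, j)) if and only if (j+1, v) (respectively (v, j+1)) is an edge of the same type. Then the LLT generating function of G over colorings f with the extra constraint f(j) > f(j+1) equals the LLT generating function of G over colorings with the extra constraint f(j+1) > f(j); i.e., swapping the roles of j and j+1 leaves the LLT polynomial invariant. -/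
open scoped Classical

noncomputable section

/-- An LLT graph: a directed graph with three types of edges
(type I, type II, and double edges). -/
structure LLTGraph (V : Type*) where
  E1 : Finset (V × V)
  E2 : Finset (V × V)
  Ed : Finset (V × V)

/-- The weight `∏ φ_f(u,v)` of a coloring `f : V → ℤ_{>0}`:
type I edges impose `f u > f v`, type II edges impose `f u ≥ f v`,
and double edges contribute `q` if `f u > f v` and `1` if `f u ≤ f v`
(the variable `q` is `Polynomial.X`). -/
noncomputable def lltWeight {V : Type*} (G : LLTGraph V) (f : V → ℕ+) : Polynomial ℤ :=
  (∏ e ∈ G.E1, if f e.2 < f e.1 then 1 else 0) *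
  (∏ e ∈ G.E2, if f e.2 ≤ f e.1 then 1 else 0) *
  (∏ e ∈ G.Ed, if f e.2 < f e.1 then Polynomial.X else 1)

/-- The LLT polynomial of an LLT graph, as a formal power series in the
variables `x_1, x_2, ...` (indexed by `ℕ+`): the coefficient of a monomial `d`
is the sum of the weights of all colorings `f` whose monomial `∏ v, x_{f v}` is `d`. -/
noncomputable def LLT {V : Type*} [Fintype V] (G : LLTGraph V) :
    MvPowerSeries ℕ+ (Polynomial ℤ) :=
  fun d => ∑ᶠ f : V → ℕ+,
    if (∑ v : V, Finsupp.single (f v) 1) = d then lltWeight G f else 0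


section Aux

variable {V : Type*} [DecidableEq V]

lemma swap_mem_edge {j k : V} (S : Finset (V × V))
    (hno : ∀ u w : V, u ∈ ({j, k} : Set V) → w ∈ ({j, k} : Set V) → (u, w) ∉ S)
    (hs : ∀ v : V, v ≠ j → v ≠ k →
      (((j, v) ∈ S ↔ (k, v) ∈ S) ∧ ((v, j) ∈ S ↔ (v, k) ∈ S))) :
    ∀ e ∈ S, (Equiv.swap j k e.1, Equiv.swap j k e.2) ∈ S := by
  rintro ⟨a, b⟩ hab
  by_cases haj : a = j
  · by_cases hbj : b = j
    · rw [haj, hbj] at hab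
      exact absurd hab (hno j j (by simp) (by simp))
    by_cases hbk : b = k
    · rw [haj, hbk] at hab
      exact absurd hab (hno j k (by simp) (by simp))
    · rw [haj] at hab ⊢
      simpa [Equiv.swap_apply_left, Equiv.swap_apply_of_ne_of_ne hbj hbk] using
        (hs b hbj hbk).1.mp hab
  · by_cases hak : a = k
    · by_cases hbj : b = j
      · rw [hak, hbj] at hab
        exact absurd hab (hno k j (by simp) (by simp))
      by_cases hbk : b = k
      · rw [hak, hbk] at hab
        exact absurd hab (hno k k (by simp) (by simp))
      · rw [hak] at hab ⊢
        simpa [Equiv.swap_apply_right, Equiv.swap_apply_of_ne_of_ne hbj hbk] using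
          (hs b hbj hbk).1.mpr hab
    · by_cases hbj : b = j
      · rw [hbj] at hab ⊢
        simpa [Equiv.swap_apply_left, Equiv.swap_apply_of_ne_of_ne haj hak] using
          (hs a haj hak).2.mp hab
      by_cases hbk : b = k
      · rw [hbk] at hab ⊢
        simpa [Equiv.swap_apply_right, Equiv.swap_apply_of_ne_of_ne haj hak] using
          (hs a haj hak).2.mpr hab
      · simpa [Equiv.swap_apply_of_ne_of_ne haj hak,
          Equiv.swap_apply_of_ne_of_ne hbj hbk] using hab

lemma prod_swap_edges {j k : V} {M : Type*} [CommMonoid M] (S : Finset (V × V))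
    (hmap : ∀ e ∈ S, (Equiv.swap j k e.1, Equiv.swap j k e.2) ∈ S)
    (w : V × V → M) :
    ∏ e ∈ S, w (Equiv.swap j k e.1, Equiv.swap j k e.2) = ∏ e ∈ S, w e := by
  refine Finset.prod_nbij' (fun e => (Equiv.swap j k e.1, Equiv.swap j k e.2))
    (fun e => (Equiv.swap j k e.1, Equiv.swap j k e.2)) hmap hmap ?_ ?_ ?_
  · intro a _; simp
  · intro a _; simp
  · intro a _; rfl

end Aux

/-- Exchangeability of two vertices `j`, `k` (playing the roles of `j` and `j+1`):
if an LLT graph `G` has no edges between (or at) `j` and `k`, and for every other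
vertex `v` the pair `(j,v)` (respectively `(v,j)`) is an edge of a given type iff
`(k,v)` (respectively `(v,k)`) is an edge of the same type, then adding a type I
edge `(j,k)` (imposing `f j > f k`) or a type I edge `(k,j)` (imposing `f k > f j`)
yields the same LLT polynomial. -/
theorem LLT_swap_invariant {V : Type*} [Fintype V] [DecidableEq V] (G : LLTGraph V)
    (j k : V) (hjk : j ≠ k)
    (hnoedge : ∀ u w : V, u ∈ ({j, k} : Set V) → w ∈ ({j, k} : Set V) →
      (u, w) ∉ G.E1 ∧ (u, w) ∉ G.E2 ∧ (u, w) ∉ G.Ed)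
    (hsym : ∀ v : V, v ≠ j → v ≠ k →
      (((j, v) ∈ G.E1 ↔ (k, v) ∈ G.E1) ∧ ((v, j) ∈ G.E1 ↔ (v, k) ∈ G.E1) ∧
       ((j, v) ∈ G.E2 ↔ (k, v) ∈ G.E2) ∧ ((v, j) ∈ G.E2 ↔ (v, k) ∈ G.E2) ∧
       ((j, v) ∈ G.Ed ↔ (k, v) ∈ G.Ed) ∧ ((v, j) ∈ G.Ed ↔ (v, k) ∈ G.Ed))) :
    LLT (⟨insert (j, k) G.E1, G.E2, G.Ed⟩ : LLTGraph V) =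
      LLT (⟨insert (k, j) G.E1, G.E2, G.Ed⟩ : LLTGraph V) := by
  classical
  funext d
  have hmap1 : ∀ e ∈ G.E1, (Equiv.swap j k e.1, Equiv.swap j k e.2) ∈ G.E1 :=
    swap_mem_edge G.E1 (fun u w hu hw => (hnoedge u w hu hw).1)
      (fun v hvj hvk => ⟨(hsym v hvj hvk).1, (hsym v hvj hvk).2.1⟩)
  have hmap2 : ∀ e ∈ G.E2, (Equiv.swap j k e.1, Equiv.swap j k e.2) ∈ G.E2 :=
    swap_mem_edge G.E2 (fun u w hu hw => (hnoedge u w hu hw).2.1)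
      (fun v hvj hvk => ⟨(hsym v hvj hvk).2.2.1, (hsym v hvj hvk).2.2.2.1⟩)
  have hmapd : ∀ e ∈ G.Ed, (Equiv.swap j k e.1, Equiv.swap j k e.2) ∈ G.Ed :=
    swap_mem_edge G.Ed (fun u w hu hw => (hnoedge u w hu hw).2.2)
      (fun v hvj hvk => ⟨(hsym v hvj hvk).2.2.2.2.1, (hsym v hvj hvk).2.2.2.2.2⟩)
  have hjk1 : (j, k) ∉ G.E1 := (hnoedge j k (by simp) (by simp)).1
  have hkj1 : (k, j) ∉ G.E1 := (hnoedge k j (by simp) (by simp)).1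
  have key : ∀ f : V → ℕ+,
      (if (∑ v : V, Finsupp.single (f v) 1) = d then
        lltWeight (⟨insert (j, k) G.E1, G.E2, G.Ed⟩ : LLTGraph V) f else 0) =
      (if (∑ v : V, Finsupp.single ((f ∘ Equiv.swap j k) v) 1) = d then
        lltWeight (⟨insert (k, j) G.E1, G.E2, G.Ed⟩ : LLTGraph V) (f ∘ Equiv.swap j k)
        else 0) := by
    intro f
    have hsum : (∑ v : V, Finsupp.single (f (Equiv.swap j k v)) 1) =
        ∑ v : V, Finsupp.single (f v) 1 :=
      Equiv.sum_comp (Equiv.swap j k) (fun v => Finsupp.single (f v) 1)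
    have h1 : (∏ e ∈ G.E1,
          if f (Equiv.swap j k e.2) < f (Equiv.swap j k e.1) then (1 : Polynomial ℤ) else 0)
        = ∏ e ∈ G.E1, if f e.2 < f e.1 then (1 : Polynomial ℤ) else 0 :=
      prod_swap_edges G.E1 hmap1 (fun p : V × V => if f p.2 < f p.1 then 1 else 0)
    have h2 : (∏ e ∈ G.E2,
          if f (Equiv.swap j k e.2) ≤ f (Equiv.swap j k e.1) then (1 : Polynomial ℤ) else 0)
        = ∏ e ∈ G.E2, if f e.2 ≤ f e.1 then (1 : Polynomial ℤ) else 0 :=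
      prod_swap_edges G.E2 hmap2 (fun p : V × V => if f p.2 ≤ f p.1 then 1 else 0)
    have hd : (∏ e ∈ G.Ed,
          if f (Equiv.swap j k e.2) < f (Equiv.swap j k e.1) then Polynomial.X
          else (1 : Polynomial ℤ))
        = ∏ e ∈ G.Ed, if f e.2 < f e.1 then Polynomial.X else (1 : Polynomial ℤ) :=
      prod_swap_edges G.Ed hmapd (fun p : V × V => if f p.2 < f p.1 then Polynomial.X else 1)
    simp only [Function.comp_apply]
    rw [hsum]
    congr 1
    unfold lltWeight
    simp only [Finset.prod_insert hjk1, Finset.prod_insert hkj1, Function.comp_apply,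
      Equiv.swap_apply_left, Equiv.swap_apply_right]
    rw [h1, h2, hd]
  let E : (V → ℕ+) ≃ (V → ℕ+) :=
    { toFun := fun f => f ∘ Equiv.swap j k
      invFun := fun f => f ∘ Equiv.swap j k
      left_inv := fun f => by funext v; simp
      right_inv := fun f => by funext v; simp }
  calc LLT (⟨insert (j, k) G.E1, G.E2, G.Ed⟩ : LLTGraph V) d
      = ∑ᶠ f : V → ℕ+,
        (if (∑ v : V, Finsupp.single ((f ∘ Equiv.swap j k) v) 1) = d then
          lltWeight (⟨insert (k, j) G.E1, G.E2, G.Ed⟩ : LLTGraph V) (f ∘ Equiv.swap j k)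
          else 0) := by
        unfold LLT; exact finsum_congr key
    _ = LLT (⟨insert (k, j) G.E1, G.E2, G.Ed⟩ : LLTGraph V) d := by
        unfold LLT
        exact finsum_comp_equiv E
          (f := fun g : V → ℕ+ => if (∑ v : V, Finsupp.single (g v) 1) = d then
            lltWeight (⟨insert (k, j) G.E1, G.E2, G.Ed⟩ : LLTGraph V) g else 0)
end
end

section
/- Let G be an LLT graph containing three vertices i < j < j+1 such that: (i,j) is a double edge, (j, j+1) is a double edge, (i, j+1) is a type I edge (and the edge-relations of j and j+1 to all vertices v > j+1 coincide type-by-type; there are no other edges among i, j, j+1 beyond those stated plus the common outside relations). Let G' be the graph obtained by replacing the double edge (i,j) with a type I edge (i,j) and deleting the type I edge (i,j+1). Then LLT(G) = q·LLT(G'), as formal power series with coefficients in ℤ[q]. -/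
open scoped Classical

noncomputable section

/-! Swapping the colours of `b` and `c` is an involution on colourings that preserves the
monomial and, by the symmetry hypothesis, the weight of every edge outside the triangle. It
therefore suffices to compare the triangle's contributions summed over each orbit
`{f, f ∘ swap b c}`; a case analysis on the relative order of `f a, f b, f c` gives
`triangle_weight_add_swap`, and summing over all colourings counts each side twice. -/

theorem triangle_weight_add_swap {α R : Type*} [LinearOrder α] [CommSemiring R] (q : R)
    (x y z : α) :
    (if z < x then 1 else 0) * (if y < x then q else 1) * (if z < y then q else 1) +
      (if y < x then 1 else 0) * (if z < x then q else 1) * (if y < z then q else 1) =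
    q * ((if y < x then 1 else 0) * (if z < y then q else 1) +
      (if z < x then 1 else 0) * (if y < z then q else 1)) := by
  split_ifs <;> first | ring1 | (exfalso; order)

theorem finsum_eq_of_add_comp_equiv {α M : Type*} [AddCommGroup M] [IsAddTorsionFree M]
    (σ : α ≃ α) {F H : α → M} (hF : (Function.support F).Finite)
    (hH : (Function.support H).Finite) (h : ∀ x, F x + F (σ x) = H x + H (σ x)) :
    ∑ᶠ x, F x = ∑ᶠ x, H x := by
  have hsum : ∀ {K : α → M}, (Function.support K).Finite →
      ∑ᶠ x, (K x + K (σ x)) = 2 • ∑ᶠ x, K x := fun {K} hK => by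
    rw [finsum_add_distrib hK (hK.preimage σ.injective.injOn), finsum_comp_equiv σ, two_nsmul]
  have := finsum_congr h
  rw [hsum hF, hsum hH] at this
  exact IsAddTorsionFree.nsmul_right_injective two_ne_zero this

theorem Finset.prod_comp_prodMap_of_mem_iff {α M : Type*} [CommMonoid M] (e : α ≃ α)
    {S : Finset (α × α)} (hS : ∀ p, Prod.map e e p ∈ S ↔ p ∈ S) (g : α × α → M) :
    ∏ p ∈ S, g (Prod.map e e p) = ∏ p ∈ S, g p :=
  Finset.prod_equiv (e.prodCongr e) (fun p => (hS p).symm) fun _ _ => rfl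

theorem Finset.prodMap_swap_mem_iff {V : Type*} [DecidableEq V] {S : Finset (V × V)} {T : Set V}
    {b c : V} (hb : b ∈ T) (hc : c ∈ T) (hin : ∀ u w, u ∈ T → w ∈ T → (u, w) ∉ S)
    (hout : ∀ v, v ∉ T → (((b, v) ∈ S ↔ (c, v) ∈ S) ∧ ((v, b) ∈ S ↔ (v, c) ∈ S))) (p : V × V) :
    Prod.map (Equiv.swap b c) (Equiv.swap b c) p ∈ S ↔ p ∈ S := by
  have hfix : ∀ v ∉ T, Equiv.swap b c v = v := fun v hv =>
    Equiv.swap_apply_of_ne_of_ne (ne_of_mem_of_not_mem hb hv).symm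
      (ne_of_mem_of_not_mem hc hv).symm
  have hmaps : ∀ v ∈ T, Equiv.swap b c v ∈ T := fun v hv => by
    rw [Equiv.swap_apply_def]; split_ifs <;> assumption
  obtain ⟨u, w⟩ := p
  by_cases hu : u ∈ T <;> by_cases hw : w ∈ T
  · exact iff_of_false (hin _ _ (hmaps u hu) (hmaps w hw)) (hin u w hu hw)
  · rw [Prod.map, hfix w hw, Equiv.swap_apply_def]
    split_ifs <;> subst_vars
    exacts [(hout w hw).1.symm, (hout w hw).1, Iff.rfl]
  · rw [Prod.map, hfix u hu, Equiv.swap_apply_def]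
    split_ifs <;> subst_vars
    exacts [(hout u hu).2.symm, (hout u hu).2, Iff.rfl]
  · rw [Prod.map, hfix u hu, hfix w hw]

section

variable {V : Type*}

theorem lltWeight_comp_of_mem_iff (G : LLTGraph V) (e : V ≃ V)
    (h1 : ∀ p, Prod.map e e p ∈ G.E1 ↔ p ∈ G.E1) (h2 : ∀ p, Prod.map e e p ∈ G.E2 ↔ p ∈ G.E2)
    (hd : ∀ p, Prod.map e e p ∈ G.Ed ↔ p ∈ G.Ed) (f : V → ℕ+) :
    lltWeight G (f ∘ e) = lltWeight G f :=
  congr_arg₂ (· * ·)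
    (congr_arg₂ (· * ·)
      (Finset.prod_comp_prodMap_of_mem_iff e h1 fun p => if f p.2 < f p.1 then 1 else 0)
      (Finset.prod_comp_prodMap_of_mem_iff e h2 fun p => if f p.2 ≤ f p.1 then 1 else 0))
    (Finset.prod_comp_prodMap_of_mem_iff e hd fun p => if f p.2 < f p.1 then Polynomial.X else 1)

section

variable [DecidableEq V] {E1 E2 Ed : Finset (V × V)} {p : V × V}

theorem lltWeight_eq_mul_erase_E1 (hp : p ∈ E1) (f : V → ℕ+) :
    lltWeight ⟨E1, E2, Ed⟩ f =
      (if f p.2 < f p.1 then 1 else 0) * lltWeight ⟨E1.erase p, E2, Ed⟩ f := by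
  rw [lltWeight, lltWeight, ← Finset.mul_prod_erase _ _ hp]
  ring

theorem lltWeight_eq_mul_erase_Ed (hp : p ∈ Ed) (f : V → ℕ+) :
    lltWeight ⟨E1, E2, Ed⟩ f =
      (if f p.2 < f p.1 then Polynomial.X else 1) * lltWeight ⟨E1, E2, Ed.erase p⟩ f := by
  rw [lltWeight, lltWeight, ← Finset.mul_prod_erase _ _ hp]
  ring

theorem lltWeight_insert_E1 (hp : p ∉ E1) (f : V → ℕ+) :
    lltWeight ⟨insert p E1, E2, Ed⟩ f =
      (if f p.2 < f p.1 then 1 else 0) * lltWeight ⟨E1, E2, Ed⟩ f := by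
  rw [lltWeight_eq_mul_erase_E1 (Finset.mem_insert_self p E1), Finset.erase_insert hp]

end

def coloringMonomial [Fintype V] (f : V → ℕ+) : ℕ+ →₀ ℕ := ∑ v, Finsupp.single (f v) 1

theorem coloringMonomial_comp_equiv [Fintype V] (f : V → ℕ+) (e : V ≃ V) :
    coloringMonomial (f ∘ e) = coloringMonomial f :=
  Fintype.sum_equiv e _ _ fun _ => rfl

theorem finite_setOf_coloringMonomial_eq [Fintype V] (d : ℕ+ →₀ ℕ) :
    {f : V → ℕ+ | coloringMonomial f = d}.Finite := by
  refine (Set.Finite.pi' fun _ => d.support.finite_toSet).subset fun f hf v => ?_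
  rw [Set.mem_ofPred_eq] at hf
  rw [Finset.mem_coe, Finsupp.mem_support_iff, ← hf, coloringMonomial, Finsupp.finsetSum_apply]
  exact (Finset.sum_pos' (fun _ _ => Nat.zero_le _) ⟨v, Finset.mem_univ v, by simp⟩).ne'

theorem LLT_eq_C_mul_of_add_comp_equiv [Fintype V] {G G' : LLTGraph V} (e : V ≃ V)
    (r : Polynomial ℤ)
    (h : ∀ f, lltWeight G f + lltWeight G (f ∘ e) = r * (lltWeight G' f + lltWeight G' (f ∘ e))) :
    LLT G = MvPowerSeries.C r * LLT G' := by
  refine MvPowerSeries.ext fun d => ?_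
  rw [MvPowerSeries.coeff_C_mul]
  show ∑ᶠ f, (if coloringMonomial f = d then lltWeight G f else 0) =
    r * ∑ᶠ f, (if coloringMonomial f = d then lltWeight G' f else 0)
  have hfin : ∀ w : (V → ℕ+) → Polynomial ℤ,
      (Function.support fun f => if coloringMonomial f = d then w f else 0).Finite :=
    fun w => (finite_setOf_coloringMonomial_eq d).subset fun f hf => by
      by_contra hd
      exact hf (if_neg hd)
  rw [mul_finsum]
  refine finsum_eq_of_add_comp_equiv (e.symm.arrowCongr (.refl ℕ+)) (hfin _)
    ?_ fun f => ?_
  · simpa only [mul_ite, mul_zero] using hfin (fun f => r * lltWeight G' f)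
  · rw [show e.symm.arrowCongr (.refl ℕ+) f = f ∘ e from rfl, coloringMonomial_comp_equiv]
    split_ifs
    · rw [h, mul_add]
    · simp

end

/-- The local triangle relation used in Schröder path relation (B): if `a, b, c`
(playing the roles of `i < j < j+1`) are distinct vertices of an LLT graph `G` with
double edges `(a,b)` and `(b,c)`, a type I edge `(a,c)`, no other edges among
`{a,b,c}`, and `b` and `c` have identical edge-relations (type by type) to every
vertex outside `{a,b,c}`, then `LLT(G) = q·LLT(G')`, where `G'` is obtained by
replacing the double edge `(a,b)` with a type I edge `(a,b)` and deleting the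
type I edge `(a,c)`. -/
theorem LLT_triangle_relation {V : Type*} [Fintype V] [DecidableEq V] (G : LLTGraph V)
    (a b c : V) (hab : a ≠ b) (hbc : b ≠ c) (hac : a ≠ c)
    (h1 : (a, b) ∈ G.Ed) (h2 : (b, c) ∈ G.Ed) (h3 : (a, c) ∈ G.E1)
    (honlyE1 : ∀ u w : V, u ∈ ({a, b, c} : Set V) → w ∈ ({a, b, c} : Set V) →
      (u, w) ∈ G.E1 → (u, w) = (a, c))
    (honlyE2 : ∀ u w : V, u ∈ ({a, b, c} : Set V) → w ∈ ({a, b, c} : Set V) →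
      (u, w) ∉ G.E2)
    (honlyEd : ∀ u w : V, u ∈ ({a, b, c} : Set V) → w ∈ ({a, b, c} : Set V) →
      (u, w) ∈ G.Ed → (u, w) = (a, b) ∨ (u, w) = (b, c))
    (hsym : ∀ v : V, v ∉ ({a, b, c} : Set V) →
      (((b, v) ∈ G.E1 ↔ (c, v) ∈ G.E1) ∧ ((v, b) ∈ G.E1 ↔ (v, c) ∈ G.E1) ∧
       ((b, v) ∈ G.E2 ↔ (c, v) ∈ G.E2) ∧ ((v, b) ∈ G.E2 ↔ (v, c) ∈ G.E2) ∧
       ((b, v) ∈ G.Ed ↔ (c, v) ∈ G.Ed) ∧ ((v, b) ∈ G.Ed ↔ (v, c) ∈ G.Ed))) :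
    LLT G =
      MvPowerSeries.C (σ := ℕ+) (R := Polynomial ℤ) Polynomial.X *
        LLT (⟨insert (a, b) (G.E1.erase (a, c)), G.E2, G.Ed.erase (a, b)⟩ :
          LLTGraph V) := by
  set R : LLTGraph V := ⟨G.E1.erase (a, c), G.E2, (G.Ed.erase (a, b)).erase (b, c)⟩
  have hbc_mem : (b, c) ∈ G.Ed.erase (a, b) := by simp [hab.symm, h2]
  have hab_notMem : (a, b) ∉ G.E1.erase (a, c) := fun h =>
    hbc (congrArg Prod.snd (honlyE1 a b (by simp) (by simp) (Finset.mem_of_mem_erase h)))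
  have hR : ∀ f, lltWeight R (f ∘ Equiv.swap b c) = lltWeight R f := by
    have hswap := fun S =>
      Finset.prodMap_swap_mem_iff (S := S) (T := {a, b, c}) (b := b) (c := c) (by simp) (by simp)
    refine lltWeight_comp_of_mem_iff R _ (hswap _ ?insideE1 ?outsideE1)
      (hswap _ honlyE2 fun v hv => ⟨(hsym v hv).2.2.1, (hsym v hv).2.2.2.1⟩)
      (hswap _ ?insideEd ?outsideEd)
    case insideE1 => exact fun u w hu hw h =>
      (Finset.mem_erase.1 h).1 (honlyE1 u w hu hw (Finset.mem_of_mem_erase h))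
    case insideEd =>
      intro u w hu hw h
      simp only [R, Finset.mem_erase] at h
      exact (honlyEd u w hu hw h.2.2).elim h.2.1 h.1
    case outsideE1 | outsideEd =>
      intro v hv
      have hsymv := hsym v hv
      simp only [Set.mem_insert_iff, Set.mem_singleton_iff, not_or] at hv
      simp [R, hv.1, hv.2.1, hv.2.2, hab.symm, hac.symm, hbc.symm, hsymv]
  have hG : ∀ f, lltWeight G f = (if f c < f a then 1 else 0) *
      ((if f b < f a then Polynomial.X else 1) * ((if f c < f b then Polynomial.X else 1) *
        lltWeight R f)) := fun f => by
    rw [lltWeight_eq_mul_erase_E1 h3, lltWeight_eq_mul_erase_Ed h1,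
      lltWeight_eq_mul_erase_Ed hbc_mem]
  have hG' : ∀ f, lltWeight ⟨insert (a, b) (G.E1.erase (a, c)), G.E2, G.Ed.erase (a, b)⟩ f =
      (if f b < f a then 1 else 0) * ((if f c < f b then Polynomial.X else 1) * lltWeight R f) :=
    fun f => by rw [lltWeight_insert_E1 hab_notMem, lltWeight_eq_mul_erase_Ed hbc_mem]
  refine LLT_eq_C_mul_of_add_comp_equiv (Equiv.swap b c) _ fun f => ?_
  simp only [hG, hG', hR, Function.comp_apply, Equiv.swap_apply_left, Equiv.swap_apply_right,
    Equiv.swap_apply_of_ne_of_ne hab hac]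
  linear_combination
    lltWeight R f * triangle_weight_add_swap (Polynomial.X : Polynomial ℤ) (f a) (f b) (f c)
end
end
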